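/- arXiv:2307.16076 — 3 statements merged into one kernel-verified Lean document; each statement's English description precedes it below -/
import Mathlib

section
/- Let A be a small category and F : A ⥤ Cat a functor. Define the lax cocone inc under F with vertex ∫F by: inc_A : F(A) ⥤ ∫F sends X to (A, X) and α : X → X' to (id_A, α); for each h : A → B in A, the natural transformation inc_h : inc_A ⟹ inc_B ∘ F(h) has component (h, id) at X. Then inc is universal in the 2-categorical sense: (i) for every category U and every lax cocone σ under F with vertex U there is a unique functor s : ∫F ⥤ U with s ∘ inc_A = σ_A for all A and s ⋆ inc_h = σ_h for all h (explicitly, s(C, X) = σ_C(X) and s(f, α) = σ_D(α) ∘ (σ_f)_X); (ii) for all functors s, t : ∫F ⥤ U and every modification Ξ from the lax cocone (s ∘ inc_A, s ⋆ inc_h) to the lax cocone (t ∘ inc_A, t ⋆ inc_h), there is a unique natural transformation χ : s ⟹ t with χ ⋆ inc_A = Ξ_A for all A. Hence ∫F is the oplax (conical) colimit of F. -/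
universe w' w v u

open CategoryTheory

namespace IG

lemma hom_heq_iff {C : Type*} [Category C] {X X' Y Y' : C} (hX : X = X') (hY : Y = Y')
    (f : X ⟶ Y) (g : X' ⟶ Y') :
    HEq f g ↔ f = eqToHom hX ≫ g ≫ eqToHom hY.symm := by
  subst hX hY; simp

lemma groth_factor {A : Type u} [Category.{u} A] (F : A ⥤ Cat.{u, u})
    {X Y : Grothendieck F} (m : X ⟶ Y) :
    m = (Grothendieck.ιNatTrans m.base).app X.fiber ≫ (Grothendieck.ι F Y.base).map m.fiber := by
  obtain ⟨xb, xf⟩ := X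
  obtain ⟨yb, yf⟩ := Y
  change m = (⟨m.base, 𝟙 _⟩ : (⟨xb, xf⟩ : Grothendieck F) ⟶ ⟨yb, (F.map m.base).toFunctor.obj xf⟩) ≫
    (⟨𝟙 yb, eqToHom (by simp) ≫ m.fiber⟩ : (⟨yb, (F.map m.base).toFunctor.obj xf⟩ : Grothendieck F) ⟶ ⟨yb, yf⟩)
  apply Grothendieck.ext _ _ (by simp)
  simp [eqToHom_map]
  rw [← Category.assoc]
  exact congrArg (· ≫ m.fiber) (eqToHom_trans _ _).symm

/-- A lax cocone under `F : A ⥤ Cat` with vertex `U` (i.e. a lax natural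
transformation `F ⟹ ΔU`). -/
structure LaxCocone {A : Type u} [Category.{u} A] (F : A ⥤ Cat.{u, u})
    (U : Type w) [Category.{w'} U] where
  app : ∀ a : A, (F.obj a : Type u) ⥤ U
  nat : ∀ {a b : A} (h : a ⟶ b),
    app a ⟶ (F.map h).toFunctor ⋙ app b
  nat_id : ∀ a : A, nat (𝟙 a) = eqToHom (by simp only [CategoryTheory.Functor.map_id]; rfl)
  nat_comp : ∀ {a b c : A} (h : a ⟶ b) (k : b ⟶ c),
    nat (h ≫ k) = nat h ≫ Functor.whiskerLeft (F.map h).toFunctor (nat k) ≫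
      eqToHom (by simp only [Functor.map_comp]; rfl)

/-- The canonical lax cocone `inc` on `∫F`, with components the fiber
inclusions `Grothendieck.ι F a` and structure `2`-cells `Grothendieck.ιNatTrans h`
(with components `(h, 𝟙)`), is `2`-categorically universal; hence `∫F` is the oplax
(conical) colimit of `F`. -/
theorem grothendieck_is_oplax_colimit {A : Type u} [Category.{u} A] (F : A ⥤ Cat.{u, u}) :
    -- (i) for every lax cocone `σ` with vertex `U` there is a unique functor
    -- `s : ∫F ⥤ U` with `s ∘ inc_a = σ_a` and `s ⋆ inc_h = σ_h`; explicitly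
    -- `s (a, X) = σ_a X` and `s (f, α) = σ_b α ∘ (σ_f)_X`
    (∀ (U : Type w) [Category.{w'} U] (σ : LaxCocone F U),
      ∃! s : Grothendieck F ⥤ U,
        (∀ a : A, Grothendieck.ι F a ⋙ s = σ.app a) ∧
        (∀ {a b : A} (h : a ⟶ b),
          HEq (Functor.whiskerRight (Grothendieck.ιNatTrans h) s) (σ.nat h)) ∧
        (∀ X : Grothendieck F, s.obj X = (σ.app X.base).obj X.fiber) ∧
        (∀ (X Y : Grothendieck F) (m : X ⟶ Y),
          HEq (s.map m) ((σ.nat m.base).app X.fiber ≫ (σ.app Y.base).map m.fiber))) ∧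
    -- (ii) for all `s, t : ∫F ⥤ U` and every modification `Ξ` from the lax cocone
    -- `s ∘ inc` to the lax cocone `t ∘ inc` there is a unique `χ : s ⟶ t` with
    -- `χ ⋆ inc_a = Ξ_a` for all `a`
    (∀ (U : Type w) [Category.{w'} U] (s t : Grothendieck F ⥤ U)
      (Ξ : ∀ a : A, Grothendieck.ι F a ⋙ s ⟶ Grothendieck.ι F a ⋙ t),
      (∀ {a b : A} (h : a ⟶ b),
        Functor.whiskerRight (Grothendieck.ιNatTrans h) s ≫
            Functor.whiskerLeft (F.map h).toFunctor (Ξ b) =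
          Ξ a ≫ Functor.whiskerRight (Grothendieck.ιNatTrans h) t) →
      ∃! χ : s ⟶ t, ∀ a : A, Functor.whiskerLeft (Grothendieck.ι F a) χ = Ξ a) := by
  constructor
  · intro U _ σ
    refine ⟨Grothendieck.functorFrom σ.app (fun f => σ.nat f) σ.nat_id
      (fun _ _ _ f g => σ.nat_comp f g), ⟨?_, ?_, fun X => rfl, ?_⟩, ?_⟩
    · intro a
      fapply CategoryTheory.Functor.ext
      · intro X; rfl
      · intro X Y f
        simp [Grothendieck.functorFrom, Grothendieck.ι, σ.nat_id, eqToHom_app, eqToHom_map]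
        exact (Category.id_comp _).symm
    · intro a b h
      have h1 : Grothendieck.ι F a ⋙ Grothendieck.functorFrom σ.app (fun f => σ.nat f)
          σ.nat_id (fun _ _ _ f g => σ.nat_comp f g) = σ.app a := by
        fapply CategoryTheory.Functor.ext
        · intro X; rfl
        · intro X Y f
          simp [Grothendieck.functorFrom, Grothendieck.ι, σ.nat_id, eqToHom_app, eqToHom_map]
          exact (Category.id_comp _).symm
      have h2 : ((F.map h).toFunctor ⋙ Grothendieck.ι F b) ⋙ Grothendieck.functorFrom σ.app
          (fun f => σ.nat f) σ.nat_id (fun _ _ _ f g => σ.nat_comp f g) =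
          (F.map h).toFunctor ⋙ σ.app b := by
        rw [Functor.assoc]
        fapply CategoryTheory.Functor.ext
        · intro X; rfl
        · intro X Y f
          simp [Grothendieck.functorFrom, Grothendieck.ι, σ.nat_id, eqToHom_app, eqToHom_map]
          exact (Category.id_comp _).symm
      rw [hom_heq_iff h1 h2]
      ext X
      simp only [NatTrans.comp_app, eqToHom_app, eqToHom_refl, Category.id_comp, Category.comp_id]
      show (σ.nat h).app X ≫ (σ.app b).map (𝟙 _) = _
      rw [CategoryTheory.Functor.map_id]
      show (σ.nat h).app X ≫ 𝟙 _ = 𝟙 _ ≫ (σ.nat h).app X ≫ 𝟙 _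
      simp
    · intro X Y m
      exact heq_of_eq (by simp [Grothendieck.functorFrom])
    · rintro s' ⟨e1, e2, e3, e4⟩
      fapply CategoryTheory.Functor.ext
      · intro X; exact e3 X
      · intro X Y m
        have := (hom_heq_iff (e3 X) (e3 Y) _ _).mp (e4 X Y m)
        rw [this]
        simp [Grothendieck.functorFrom]
  · intro U _ s t Ξ comp
    refine ⟨⟨fun X => (Ξ X.base).app X.fiber, ?_⟩, fun a => by ext X; rfl, ?_⟩
    · intro X Y m
      erw [groth_factor F m, Functor.map_comp, Functor.map_comp]
      have h1 := NatTrans.congr_app (comp m.base) X.fiber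
      have h2 := (Ξ Y.base).naturality m.fiber
      dsimp at h1 h2 ⊢
      erw [Category.assoc, h2, ← Category.assoc, h1, Category.assoc]
      rfl
    · intro χ hχ
      ext X
      have := NatTrans.congr_app (hχ X.base) X.fiber
      dsimp at this ⊢
      exact this

end IG
end

section
/- Let A be a small category, let F, G : A ⥤ Cat be functors, and let φ : G ⟹ F be a natural transformation, regarded as a morphism in the 2-category [A, Cat] of functors A ⥤ Cat, natural transformations, and modifications. Then φ is a discrete opfibration in the 2-category [A, Cat] if and only if for every object A of A the component φ_A : G(A) ⥤ F(A) is a discrete opfibration in Cat; in this case the cleavage-preservation condition on the naturality squares is automatic. -/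
universe w' w v u
open CategoryTheory
namespace IG

structure SplitCleavage {E : Type*} [Category E] {C : Type*} [Category C] (p : E ⥤ C) where
  pushObj : ∀ (e : E) {c : C}, (p.obj e ⟶ c) → E
  pushMap : ∀ (e : E) {c : C} (f : p.obj e ⟶ c), e ⟶ pushObj e f
  pushObj_eq : ∀ (e : E) {c : C} (f : p.obj e ⟶ c), p.obj (pushObj e f) = c
  pushMap_eq : ∀ (e : E) {c : C} (f : p.obj e ⟶ c),
    p.map (pushMap e f) = f ≫ eqToHom (pushObj_eq e f).symm
  cocartesian : ∀ (e : E) {c : C} (f : p.obj e ⟶ c) {e' : E} (m : e ⟶ e')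
    (g : c ⟶ p.obj e'), p.map m = f ≫ g →
    ∃! v : pushObj e f ⟶ e', p.map v = eqToHom (pushObj_eq e f) ≫ g ∧ pushMap e f ≫ v = m
  pushObj_id : ∀ e : E, pushObj e (𝟙 (p.obj e)) = e
  pushMap_id : ∀ e : E, pushMap e (𝟙 (p.obj e)) = eqToHom (pushObj_id e).symm
  pushObj_comp : ∀ (e : E) {c c' : C} (f : p.obj e ⟶ c) (g : c ⟶ c'),
    pushObj (pushObj e f) (eqToHom (pushObj_eq e f) ≫ g) = pushObj e (f ≫ g)
  pushMap_comp : ∀ (e : E) {c c' : C} (f : p.obj e ⟶ c) (g : c ⟶ c'),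
    pushMap e f ≫ pushMap (pushObj e f) (eqToHom (pushObj_eq e f) ≫ g) =
      pushMap e (f ≫ g) ≫ eqToHom (pushObj_comp e f g).symm

def PreservesCleavage {E : Type*} [Category E] {C : Type*} [Category C]
    {E' : Type*} [Category E'] {C' : Type*} [Category C']
    {p : E ⥤ C} {q : E' ⥤ C'} (cp : SplitCleavage p) (cq : SplitCleavage q)
    (H : E ⥤ E') (K : C ⥤ C') : Prop :=
  ∃ w : p ⋙ K = H ⋙ q,
    ∀ (e : E) {c : C} (f : p.obj e ⟶ c),
      ∃ hobj : cq.pushObj (H.obj e) (eqToHom (Functor.congr_obj w e).symm ≫ K.map f)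
          = H.obj (cp.pushObj e f),
        H.map (cp.pushMap e f) =
          cq.pushMap (H.obj e) (eqToHom (Functor.congr_obj w e).symm ≫ K.map f) ≫ eqToHom hobj

def DiscreteOpfibration {E : Type*} [Category E] {C : Type*} [Category C] (p : E ⥤ C) : Prop :=
  ∀ (e : E) {c : C} (f : p.obj e ⟶ c),
    ∃! q' : Σ e' : E, e ⟶ e', ∃ h : p.obj q'.1 = c, p.map q'.2 = f ≫ eqToHom h.symm

section
variable {C : Type u} [Category.{u} C]

structure SplitOpfib (C : Type u) [Category.{u} C] : Type (u + 1) where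
  E : Type u
  str : Category.{u} E
  p : E ⥤ C
  cl : SplitCleavage p

attribute [instance] SplitOpfib.str

theorem PreservesCleavage.id_pc {E : Type*} [Category E] {p : E ⥤ C} (cp : SplitCleavage p) :
    PreservesCleavage cp cp (𝟭 E) (𝟭 C) := by
  refine ⟨rfl, fun e c f => ?_⟩
  have : (eqToHom (Functor.congr_obj (rfl : p ⋙ 𝟭 C = 𝟭 E ⋙ p) e).symm ≫ (𝟭 C).map f) = f := by
    simp
  rw [this]
  exact ⟨rfl, by simp⟩

theorem PreservesCleavage.comp_pc {E : Type*} [Category E] {C : Type*} [Category C]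
    {E' : Type*} [Category E'] {C' : Type*} [Category C']
    {E'' : Type*} [Category E''] {C'' : Type*} [Category C'']
    {p : E ⥤ C} {q : E' ⥤ C'} {r : E'' ⥤ C''}
    {cp : SplitCleavage p} {cq : SplitCleavage q} {cr : SplitCleavage r}
    {H : E ⥤ E'} {K : C ⥤ C'} {H' : E' ⥤ E''} {K' : C' ⥤ C''}
    (h1 : PreservesCleavage cp cq H K) (h2 : PreservesCleavage cq cr H' K') :
    PreservesCleavage cp cr (H ⋙ H') (K ⋙ K') := by
  obtain ⟨w1, hw1⟩ := h1
  obtain ⟨w2, hw2⟩ := h2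
  have w : p ⋙ (K ⋙ K') = (H ⋙ H') ⋙ r := by
    rw [← Functor.assoc, w1, Functor.assoc, w2, Functor.assoc]
  refine ⟨w, fun e c f => ?_⟩
  obtain ⟨o1, m1⟩ := hw1 e f
  obtain ⟨o2, m2⟩ := hw2 (H.obj e) (eqToHom (Functor.congr_obj w1 e).symm ≫ K.map f)
  have harg : (eqToHom (Functor.congr_obj w e).symm ≫ (K ⋙ K').map f) =
      eqToHom (Functor.congr_obj w2 (H.obj e)).symm ≫
        K'.map (eqToHom (Functor.congr_obj w1 e).symm ≫ K.map f) := by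
    simp [eqToHom_map]
  rw [harg]
  refine ⟨o2.trans (congrArg H'.obj o1), ?_⟩
  show H'.map (H.map (cp.pushMap e f)) = _
  rw [m1, Functor.map_comp, m2, eqToHom_map]
  simp

/-- the category of split opfibrations over `C`, with cleavage-preserving
functors over `C` as morphisms. -/
instance : Category.{u} (SplitOpfib C) where
  Hom P Q := {H : P.E ⥤ Q.E // PreservesCleavage P.cl Q.cl H (𝟭 C)}
  id P := ⟨𝟭 P.E, PreservesCleavage.id_pc P.cl⟩
  comp f g := ⟨f.1 ⋙ g.1, PreservesCleavage.comp_pc f.2 g.2⟩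
  id_comp f := rfl
  comp_id f := rfl
  assoc f g h := rfl

/-- the fibre of `p : E ⥤ C` over `c : C`. -/
def Fiber {E : Type w} [Category.{w'} E] (p : E ⥤ C) (c : C) : Type w :=
  {e : E // p.obj e = c}

instance {E : Type w} [Category.{w'} E] (p : E ⥤ C) (c : C) : Category (Fiber p c) where
  Hom a b := {m : a.1 ⟶ b.1 // p.map m = eqToHom (a.2.trans b.2.symm)}
  id a := ⟨𝟙 _, by simp⟩
  comp f g := ⟨f.1 ≫ g.1, by rw [Functor.map_comp, f.2, g.2, eqToHom_trans]⟩
  id_comp f := Subtype.ext (Category.id_comp f.1)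
  comp_id f := Subtype.ext (Category.comp_id f.1)
  assoc f g h := Subtype.ext (Category.assoc f.1 g.1 h.1)

/-- a discrete opfibration over `C`. -/
structure DOpfib (C : Type u) [Category.{u} C] : Type (u + 1) where
  E : Type u
  str : Category.{u} E
  p : E ⥤ C
  disc : DiscreteOpfibration p

attribute [instance] DOpfib.str

/-- the category of discrete opfibrations over `C`, with functors commuting with
the projections as morphisms. -/
instance : Category.{u} (DOpfib C) where
  Hom P Q := {H : P.E ⥤ Q.E // H ⋙ Q.p = P.p}
  id P := ⟨𝟭 P.E, rfl⟩
  comp f g := ⟨f.1 ⋙ g.1, by rw [Functor.assoc, g.2, f.2]⟩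
  id_comp f := Subtype.ext rfl
  comp_id f := Subtype.ext rfl
  assoc f g h := Subtype.ext rfl

end

/-- the canonical split cleavage on the Grothendieck construction projection is
given by the morphisms `(f, 𝟙)`. -/
def IsGrothCleavage {C : Type u} [Category.{u} C] (F : C ⥤ Cat.{u, u})
    (cl : SplitCleavage (Grothendieck.forget F)) : Prop :=
  ∀ (X : Grothendieck F) {c : C} (f : X.base ⟶ c),
    ∃ h : cl.pushObj X f = ({ base := c, fiber := (F.map f).toFunctor.obj X.fiber } : Grothendieck F),
      cl.pushMap X f =
        ({ base := f, fiber := 𝟙 _ } :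
            X ⟶ ({ base := c, fiber := (F.map f).toFunctor.obj X.fiber } : Grothendieck F)) ≫
          eqToHom h.symm

section NatCatSection

variable {A : Type u} [Category.{u} A]

theorem natEq {X G : A ⥤ Cat.{u, u}} (α : X ⟶ G) {a b : A} (h : a ⟶ b) :
    ((X.map h).toFunctor : (X.obj a : Type u) ⥤ (X.obj b : Type u)) ⋙
        ((α.app b).toFunctor : (X.obj b : Type u) ⥤ (G.obj b : Type u)) =
      ((α.app a).toFunctor : (X.obj a : Type u) ⥤ (G.obj a : Type u)) ⋙
        ((G.map h).toFunctor : (G.obj a : Type u) ⥤ (G.obj b : Type u)) :=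
  congrArg Cat.Hom.toFunctor (α.naturality h)

theorem app_eq_of_obj_eq {C : Type*} [Category C] {D : Type*} [Category D]
    {P Q : C ⥤ D} (t : P ⟶ Q) {o1 o2 : C} (ho : o1 = o2) :
    t.app o1 = eqToHom (by rw [ho]) ≫ t.app o2 ≫ eqToHom (by rw [ho]) := by
  cases ho; simp

/-- A modification between natural transformations `α β : X ⟶ G` of functors
`A ⥤ Cat`, i.e. a 2-cell of the 2-category `[A, Cat]`. -/
@[ext]
structure Modif {X G : A ⥤ Cat.{u, u}} (α β : X ⟶ G) where
  app : ∀ a : A, ((α.app a).toFunctor : (X.obj a : Type u) ⥤ (G.obj a : Type u)) ⟶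
    ((β.app a).toFunctor : (X.obj a : Type u) ⥤ (G.obj a : Type u))
  naturality : ∀ {a b : A} (h : a ⟶ b),
    Functor.whiskerLeft ((X.map h).toFunctor : (X.obj a : Type u) ⥤ (X.obj b : Type u)) (app b) ≫
        eqToHom (natEq β h) =
      eqToHom (natEq α h) ≫ Functor.whiskerRight (app a) (G.map h).toFunctor

/-- The hom-category `[A, Cat](X, G)`: objects are natural transformations
`X ⟶ G`, morphisms are modifications. -/
def NatCat (X G : A ⥤ Cat.{u, u}) : Type u := X ⟶ G

instance (X G : A ⥤ Cat.{u, u}) : Category.{u} (NatCat X G) where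
  Hom α β := Modif α β
  id α :=
    { app := fun a => 𝟙 _
      naturality := by
        intro a b h
        rw [Functor.whiskerLeft_id', Functor.whiskerRight_id', Category.id_comp, Category.comp_id] }
  comp m n :=
    { app := fun a => m.app a ≫ n.app a
      naturality := by
        intro a b h
        rw [Functor.whiskerLeft_comp, Functor.whiskerRight_comp, Category.assoc, n.naturality h,
          ← Category.assoc, ← Category.assoc, m.naturality h, Category.assoc] }
  id_comp m := by apply Modif.ext; funext a; simp
  comp_id m := by apply Modif.ext; funext a; simp
  assoc m n o := by apply Modif.ext; funext a; simp

/-- Postcomposition `φ ∘ −` with `φ : G ⟶ F`, as a functor between hom-categories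
of the 2-category `[A, Cat]`. -/
def postcompNat {G F : A ⥤ Cat.{u, u}} (φ : G ⟶ F) (X : A ⥤ Cat.{u, u}) :
    NatCat X G ⥤ NatCat X F where
  obj α := α ≫ φ
  map {α β} m :=
    { app := fun a => Functor.whiskerRight (m.app a) ((φ.app a).toFunctor : (G.obj a : Type u) ⥤ (F.obj a : Type u))
      naturality := by
        intro a b h
        change X ⟶ G at α β
        ext x
        have hm := NatTrans.congr_app (m.naturality h) x
        simp only [NatTrans.comp_app, Functor.whiskerLeft_app, Functor.whiskerRight_app, eqToHom_app] at hm ⊢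
        have hφ := Functor.congr_hom (natEq φ h) ((m.app a).app x)
        simp only [Functor.comp_map] at hφ
        rw [comp_eqToHom_iff] at hm
        rw [hm]
        simp only [Functor.map_comp, eqToHom_map, hφ]
        simp [eqToHom_trans]
        erw [eqToHom_app, eqToHom_app]
        simp }
  map_id α := by
    apply Modif.ext; funext a
    show Functor.whiskerRight (𝟙 (α.app a).toFunctor) ((φ.app a).toFunctor : (G.obj a : Type u) ⥤ (F.obj a : Type u)) = 𝟙 _
    rw [Functor.whiskerRight_id']
  map_comp m n := by
    apply Modif.ext; funext a
    show Functor.whiskerRight (_ ≫ _) _ = Functor.whiskerRight _ _ ≫ Functor.whiskerRight _ _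
    rw [Functor.whiskerRight_comp]

/-- Precomposition `− ∘ λ` with `lam : K ⟶ X`, as a functor between hom-categories
of the 2-category `[A, Cat]`. -/
def precompNat {K X : A ⥤ Cat.{u, u}} (lam : K ⟶ X) (G : A ⥤ Cat.{u, u}) :
    NatCat X G ⥤ NatCat K G where
  obj α := lam ≫ α
  map {α β} m :=
    { app := fun a => Functor.whiskerLeft ((lam.app a).toFunctor : (K.obj a : Type u) ⥤ (X.obj a : Type u)) (m.app a)
      naturality := by
        intro a b h
        change X ⟶ G at α β
        ext x
        have hO := Functor.congr_obj (natEq lam h) x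
        simp only [Functor.comp_obj] at hO
        have hm := NatTrans.congr_app (m.naturality h) ((lam.app a).toFunctor.obj x)
        simp only [NatTrans.comp_app, Functor.whiskerLeft_app, Functor.whiskerRight_app, eqToHom_app] at hm ⊢
        rw [comp_eqToHom_iff] at hm
        rw [app_eq_of_obj_eq (m.app b) hO, hm]
        simp [eqToHom_trans]
        erw [eqToHom_app, eqToHom_app]
        simp }
  map_id α := by
    apply Modif.ext; funext a
    show Functor.whiskerLeft ((lam.app a).toFunctor : (K.obj a : Type u) ⥤ (X.obj a : Type u)) (𝟙 (α.app a).toFunctor) = 𝟙 _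
    rw [Functor.whiskerLeft_id']
  map_comp m n := by
    apply Modif.ext; funext a
    show Functor.whiskerLeft _ (_ ≫ _) = Functor.whiskerLeft _ _ ≫ Functor.whiskerLeft _ _
    rw [Functor.whiskerLeft_comp]

/-- A split opfibration in the 2-category `[A, Cat]` (representable definition):
every postcomposition functor `φ ∘ − : [A,Cat](X, G) ⥤ [A,Cat](X, F)` carries a
split cleavage, compatibly with all precompositions. -/
structure SplitOpfibInFunctorCat {G F : A ⥤ Cat.{u, u}} (φ : G ⟶ F) where
  cleav : ∀ X : A ⥤ Cat.{u, u}, SplitCleavage (postcompNat φ X)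
  compat : ∀ {K X : A ⥤ Cat.{u, u}} (lam : K ⟶ X),
    PreservesCleavage (cleav X) (cleav K) (precompNat lam G) (precompNat lam F)

end NatCatSection

section DOpfAux
variable {E : Type*} [Category E] {C : Type*} [Category C] {p : E ⥤ C}

/-- In a discrete opfibration, a morphism is determined by its domain and projection. -/
theorem DiscreteOpfibration.sigmaEq (hp : DiscreteOpfibration p) {e e1 e2 : E}
    (v1 : e ⟶ e1) (v2 : e ⟶ e2) (h2 : p.obj e2 = p.obj e1)
    (hm : p.map v2 = p.map v1 ≫ eqToHom h2.symm) :
    (⟨e1, v1⟩ : Σ x : E, e ⟶ x) = ⟨e2, v2⟩ := by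
  obtain ⟨q, hq, huniq⟩ := hp e (p.map v1)
  have ha := huniq ⟨e1, v1⟩ ⟨rfl, by simp⟩
  have hb := huniq ⟨e2, v2⟩ ⟨h2, hm⟩
  rw [ha, hb]

theorem sigma_hom_eq {e e1 e2 : E} {v1 : e ⟶ e1} {v2 : e ⟶ e2}
    (h : (⟨e1, v1⟩ : Σ x : E, e ⟶ x) = ⟨e2, v2⟩) :
    ∃ ho : e1 = e2, v2 = v1 ≫ eqToHom ho := by
  obtain ⟨ho, hv⟩ := Sigma.mk.inj_iff.mp h
  subst ho
  exact ⟨rfl, by simpa using (eq_of_heq hv).symm⟩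

theorem sigma_eq_of {e z1 z2 : E} (v1 : e ⟶ z1) (v2 : e ⟶ z2) (ho : z1 = z2)
    (hv : v2 = v1 ≫ eqToHom ho) : (⟨z1, v1⟩ : Σ x : E, e ⟶ x) = ⟨z2, v2⟩ := by
  subst ho; simp [hv]

theorem DiscreteOpfibration.hom_ext (hp : DiscreteOpfibration p) {e z : E}
    (v1 v2 : e ⟶ z) (h : p.map v1 = p.map v2) : v1 = v2 := by
  have := sigma_hom_eq (hp.sigmaEq v1 v2 rfl (by simp [h]))
  simpa using this.choose_spec.symm

/-- The chosen lift of `f` at `e`. -/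
noncomputable def DiscreteOpfibration.push (hp : DiscreteOpfibration p) (e : E) {c : C}
    (f : p.obj e ⟶ c) : Σ e' : E, e ⟶ e' :=
  (hp e f).choose

theorem DiscreteOpfibration.push_obj (hp : DiscreteOpfibration p) (e : E) {c : C}
    (f : p.obj e ⟶ c) : p.obj (hp.push e f).1 = c :=
  (hp e f).choose_spec.1.choose

theorem DiscreteOpfibration.push_map (hp : DiscreteOpfibration p) (e : E) {c : C}
    (f : p.obj e ⟶ c) :
    p.map (hp.push e f).2 = f ≫ eqToHom (hp.push_obj e f).symm := by
  exact (hp e f).choose_spec.1.choose_spec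

theorem DiscreteOpfibration.push_uniq (hp : DiscreteOpfibration p) (e : E) {c : C}
    (f : p.obj e ⟶ c) {e' : E} (v : e ⟶ e') (h : p.obj e' = c)
    (hv : p.map v = f ≫ eqToHom h.symm) :
    (⟨e', v⟩ : Σ x : E, e ⟶ x) = hp.push e f :=
  (hp e f).choose_spec.2 ⟨e', v⟩ ⟨h, hv⟩

theorem DiscreteOpfibration.exists_push_hom (hp : DiscreteOpfibration p) {e : E} {c c' : C}
    (f : p.obj e ⟶ c) (g : c ⟶ c') :
    ∃ v : (hp.push e f).1 ⟶ (hp.push e (f ≫ g)).1,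
      p.map v = eqToHom (hp.push_obj e f) ≫ g ≫ eqToHom (hp.push_obj e (f ≫ g)).symm ∧
      (hp.push e f).2 ≫ v = (hp.push e (f ≫ g)).2 := by
  have hVobj : p.obj (hp.push (hp.push e f).1 (eqToHom (hp.push_obj e f) ≫ g)).1 = c' :=
    hp.push_obj _ _
  have hVmap := hp.push_map (hp.push e f).1 (eqToHom (hp.push_obj e f) ≫ g)
  have hsig : (⟨(hp.push (hp.push e f).1 (eqToHom (hp.push_obj e f) ≫ g)).1,
      (hp.push e f).2 ≫ (hp.push (hp.push e f).1 (eqToHom (hp.push_obj e f) ≫ g)).2⟩ :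
        Σ x : E, e ⟶ x) = hp.push e (f ≫ g) := by
    apply hp.push_uniq e (f ≫ g) _ hVobj
    rw [p.map_comp, hp.push_map, hVmap]
    simp
  obtain ⟨ho, hv⟩ := sigma_hom_eq (hsig.trans (Sigma.eta _).symm)
  refine ⟨(hp.push (hp.push e f).1 (eqToHom (hp.push_obj e f) ≫ g)).2 ≫ eqToHom ho, ?_, ?_⟩
  · rw [p.map_comp, hVmap, eqToHom_map]
    simp
  · rw [hv]
    simp

/-- The canonical morphism between chosen lifts. -/
noncomputable def DiscreteOpfibration.pushHom (hp : DiscreteOpfibration p) {e : E} {c c' : C}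
    (f : p.obj e ⟶ c) (g : c ⟶ c') : (hp.push e f).1 ⟶ (hp.push e (f ≫ g)).1 :=
  (hp.exists_push_hom f g).choose

theorem DiscreteOpfibration.pushHom_map (hp : DiscreteOpfibration p) {e : E} {c c' : C}
    (f : p.obj e ⟶ c) (g : c ⟶ c') :
    p.map (hp.pushHom f g) =
      eqToHom (hp.push_obj e f) ≫ g ≫ eqToHom (hp.push_obj e (f ≫ g)).symm :=
  (hp.exists_push_hom f g).choose_spec.1

theorem DiscreteOpfibration.pushHom_comm (hp : DiscreteOpfibration p) {e : E} {c c' : C}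
    (f : p.obj e ⟶ c) (g : c ⟶ c') :
    (hp.push e f).2 ≫ hp.pushHom f g = (hp.push e (f ≫ g)).2 :=
  (hp.exists_push_hom f g).choose_spec.2

end DOpfAux

section LiftSection

variable {A : Type u} [Category.{u} A] {G F : A ⥤ Cat.{u, u}} (φ : G ⟶ F)
variable (hφ : ∀ a : A, DiscreteOpfibration ((φ.app a).toFunctor : (G.obj a : Type u) ⥤ (F.obj a : Type u)))
variable {X : A ⥤ Cat.{u, u}} (α : X ⟶ G) {β : X ⟶ F} (m : Modif (α ≫ φ) β)

/-- Object part of the pointwise lift. -/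
noncomputable def liftObj (a : A) (x : X.obj a) : (G.obj a : Type u) :=
  ((hφ a).push ((α.app a).toFunctor.obj x) ((m.app a).app x)).1

theorem liftObj_proj (a : A) (x : X.obj a) :
    (φ.app a).toFunctor.obj (liftObj φ hφ α m a x) = (β.app a).toFunctor.obj x :=
  (hφ a).push_obj _ _

/-- Morphism part of the pointwise lift. -/
noncomputable def liftMor (a : A) (x : X.obj a) :
    (α.app a).toFunctor.obj x ⟶ liftObj φ hφ α m a x :=
  ((hφ a).push ((α.app a).toFunctor.obj x) ((m.app a).app x)).2

theorem liftMor_proj (a : A) (x : X.obj a) :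
    (φ.app a).toFunctor.map (liftMor φ hφ α m a x) =
      (m.app a).app x ≫ eqToHom (liftObj_proj φ hφ α m a x).symm :=
  (hφ a).push_map _ _

theorem lift_nat (a : A) {x y : X.obj a} (u : x ⟶ y) :
    (⟨liftObj φ hφ α m a y, (α.app a).toFunctor.map u ≫ liftMor φ hφ α m a y⟩ :
        Σ e' : (G.obj a : Type u), (α.app a).toFunctor.obj x ⟶ e') =
      (hφ a).push ((α.app a).toFunctor.obj x) ((m.app a).app x ≫ (β.app a).toFunctor.map u) := by
  apply (hφ a).push_uniq _ _ _ (liftObj_proj φ hφ α m a y)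
  rw [Functor.map_comp, liftMor_proj]
  have hnat : (φ.app a).toFunctor.map ((α.app a).toFunctor.map u) ≫ (m.app a).app y =
      (m.app a).app x ≫ (β.app a).toFunctor.map u := (m.app a).naturality u
  erw [← Category.assoc, hnat, Category.assoc]

theorem lift_nat_obj (a : A) {x y : X.obj a} (u : x ⟶ y) :
    ((hφ a).push ((α.app a).toFunctor.obj x) ((m.app a).app x ≫ (β.app a).toFunctor.map u)).1 =
      liftObj φ hφ α m a y :=
  (congrArg Sigma.fst (lift_nat φ hφ α m a u)).symm

/-- Map part of the pointwise lift. -/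
noncomputable def liftMap (a : A) {x y : X.obj a} (u : x ⟶ y) :
    liftObj φ hφ α m a x ⟶ liftObj φ hφ α m a y :=
  (hφ a).pushHom ((m.app a).app x) ((β.app a).toFunctor.map u) ≫ eqToHom (lift_nat_obj φ hφ α m a u)

theorem liftMap_proj (a : A) {x y : X.obj a} (u : x ⟶ y) :
    (φ.app a).toFunctor.map (liftMap φ hφ α m a u) =
      eqToHom (liftObj_proj φ hφ α m a x) ≫ (β.app a).toFunctor.map u ≫
        eqToHom (liftObj_proj φ hφ α m a y).symm := by
  erw [liftMap, Functor.map_comp, (hφ a).pushHom_map, eqToHom_map]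
  simp
  erw [Category.assoc, Category.assoc, eqToHom_trans]
  exact rfl

theorem liftMap_comm (a : A) {x y : X.obj a} (u : x ⟶ y) :
    liftMor φ hφ α m a x ≫ liftMap φ hφ α m a u =
      (α.app a).toFunctor.map u ≫ liftMor φ hφ α m a y := by
  obtain ⟨ho, hv⟩ := sigma_hom_eq ((lift_nat φ hφ α m a u).trans (Sigma.eta _).symm)
  erw [liftMap, ← Category.assoc]
  rw [show liftMor φ hφ α m a x ≫ (hφ a).pushHom ((m.app a).app x) ((β.app a).toFunctor.map u) =
    ((hφ a).push ((α.app a).toFunctor.obj x) ((m.app a).app x ≫ (β.app a).toFunctor.map u)).2 from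
      (hφ a).pushHom_comm _ _]
  rw [show ((hφ a).push ((α.app a).toFunctor.obj x) ((m.app a).app x ≫ (β.app a).toFunctor.map u)).2 =
    ((α.app a).toFunctor.map u ≫ liftMor φ hφ α m a y) ≫ eqToHom ho from hv]
  simp

/-- The lifted component functor. -/
noncomputable def liftFunctor (a : A) : (X.obj a : Type u) ⥤ (G.obj a : Type u) where
  obj := liftObj φ hφ α m a
  map := liftMap φ hφ α m a
  map_id x := (hφ a).hom_ext _ _ (by rw [liftMap_proj]; simp)
  map_comp u v := (hφ a).hom_ext _ _ (by
    erw [liftMap_proj, Functor.map_comp (φ.app a).toFunctor, liftMap_proj, liftMap_proj]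
    simp)

theorem liftFunctor_obj (a : A) (x : X.obj a) :
    (liftFunctor φ hφ α m a).obj x = liftObj φ hφ α m a x := rfl

theorem liftFunctor_map (a : A) {x y : X.obj a} (u : x ⟶ y) :
    (liftFunctor φ hφ α m a).map u = liftMap φ hφ α m a u := rfl

theorem lift_natA {a b : A} (h : a ⟶ b) (x : X.obj a) :
    (⟨(G.map h).toFunctor.obj (liftObj φ hφ α m a x),
        eqToHom (Functor.congr_obj (natEq α h) x) ≫ (G.map h).toFunctor.map (liftMor φ hφ α m a x)⟩ :
        Σ e' : (G.obj b : Type u), (α.app b).toFunctor.obj ((X.map h).toFunctor.obj x) ⟶ e') =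
      (hφ b).push ((α.app b).toFunctor.obj ((X.map h).toFunctor.obj x)) ((m.app b).app ((X.map h).toFunctor.obj x)) := by
  have hobj : (φ.app b).toFunctor.obj ((G.map h).toFunctor.obj (liftObj φ hφ α m a x)) =
      (β.app b).toFunctor.obj ((X.map h).toFunctor.obj x) := by
    have h1 := Functor.congr_obj (natEq φ h) (liftObj φ hφ α m a x)
    have h2 := Functor.congr_obj (natEq β h) x
    simp only [Functor.comp_obj] at h1 h2
    rw [h1, liftObj_proj, ← h2]
  apply (hφ b).push_uniq _ _ _ hobj
  rw [Functor.map_comp, eqToHom_map]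
  have hGh := Functor.congr_hom (natEq φ h) (liftMor φ hφ α m a x)
  simp only [Functor.comp_map] at hGh
  rw [hGh, liftMor_proj]
  have hmod := NatTrans.congr_app (m.naturality h) x
  simp only [NatTrans.comp_app, Functor.whiskerLeft_app, Functor.whiskerRight_app, eqToHom_app] at hmod
  rw [comp_eqToHom_iff] at hmod
  erw [hmod]
  simp [eqToHom_map]
  erw [eqToHom_app]
  exact rfl

theorem liftObj_natA {a b : A} (h : a ⟶ b) (x : X.obj a) :
    liftObj φ hφ α m b ((X.map h).toFunctor.obj x) = (G.map h).toFunctor.obj (liftObj φ hφ α m a x) :=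
  (congrArg Sigma.fst (lift_natA φ hφ α m h x)).symm

theorem liftMor_natA {a b : A} (h : a ⟶ b) (x : X.obj a) :
    liftMor φ hφ α m b ((X.map h).toFunctor.obj x) =
      (eqToHom (Functor.congr_obj (natEq α h) x) ≫ (G.map h).toFunctor.map (liftMor φ hφ α m a x)) ≫
        eqToHom (liftObj_natA φ hφ α m h x).symm := by
  obtain ⟨ho, hv⟩ := sigma_hom_eq ((lift_natA φ hφ α m h x).trans (Sigma.eta _).symm)
  exact hv

theorem liftMap_natA {a b : A} (h : a ⟶ b) {x y : X.obj a} (u : x ⟶ y) :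
    liftMap φ hφ α m b ((X.map h).toFunctor.map u) =
      eqToHom (liftObj_natA φ hφ α m h x) ≫ (G.map h).toFunctor.map (liftMap φ hφ α m a u) ≫
        eqToHom (liftObj_natA φ hφ α m h y).symm := by
  apply (hφ b).hom_ext
  rw [liftMap_proj]
  have hb := Functor.congr_hom (natEq β h) u
  simp only [Functor.comp_map] at hb
  rw [hb, Functor.map_comp, Functor.map_comp, eqToHom_map, eqToHom_map]
  have hGh := Functor.congr_hom (natEq φ h) (liftMap φ hφ α m a u)
  simp only [Functor.comp_map] at hGh
  rw [hGh, liftMap_proj, Functor.map_comp, Functor.map_comp, eqToHom_map, eqToHom_map]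
  simp

/-- The lifted natural transformation. -/
noncomputable def liftNat : X ⟶ G where
  app a := ⟨liftFunctor φ hφ α m a⟩
  naturality {a b} h := by
    apply Cat.Hom.ext
    show ((X.map h).toFunctor : (X.obj a : Type u) ⥤ (X.obj b : Type u)) ⋙ liftFunctor φ hφ α m b =
      liftFunctor φ hφ α m a ⋙ ((G.map h).toFunctor : (G.obj a : Type u) ⥤ (G.obj b : Type u))
    exact CategoryTheory.Functor.ext (fun (x : ↑(X.obj a)) => liftObj_natA φ hφ α m h x)
      (fun x y u => liftMap_natA φ hφ α m h u)

/-- The lifted modification. -/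
noncomputable def liftModif : Modif α (liftNat φ hφ α m) where
  app a :=
    { app := liftMor φ hφ α m a
      naturality := fun {x y} u => (liftMap_comm φ hφ α m a u).symm }
  naturality {a b} h := by
    ext x
    simp only [NatTrans.comp_app, Functor.whiskerLeft_app, Functor.whiskerRight_app, eqToHom_app]
    show liftMor φ hφ α m b ((X.map h).toFunctor.obj x) ≫ eqToHom _ =
      eqToHom _ ≫ (G.map h).toFunctor.map (liftMor φ hφ α m a x)
    rw [liftMor_natA φ hφ α m h x]
    simp
    erw [eqToHom_trans, eqToHom_refl, Category.comp_id]

theorem liftNat_proj : liftNat φ hφ α m ≫ φ = β := by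
  apply NatTrans.ext; funext a
  apply Cat.Hom.ext
  show liftFunctor φ hφ α m a ⋙ ((φ.app a).toFunctor : (G.obj a : Type u) ⥤ (F.obj a : Type u)) =
    ((β.app a).toFunctor : (X.obj a : Type u) ⥤ (F.obj a : Type u))
  exact CategoryTheory.Functor.ext (fun (x : ↑(X.obj a)) => liftObj_proj φ hφ α m a x)
    (fun x y u => liftMap_proj φ hφ α m a u)

end LiftSection

section ModifApp
variable {A : Type u} [Category.{u} A]

theorem modif_eqToHom_app {XX GG : A ⥤ Cat.{u, u}} {γ δ : NatCat XX GG} (hh : γ = δ) (a : A) :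
    Modif.app (eqToHom hh) a = eqToHom (show (γ.app a).toFunctor = (δ.app a).toFunctor by rw [hh]) := by
  subst hh; rfl

theorem modif_comp_app {XX GG : A ⥤ Cat.{u, u}} {γ δ ε : NatCat XX GG} (s : γ ⟶ δ) (t : δ ⟶ ε)
    (a : A) : Modif.app (s ≫ t) a = Modif.app s a ≫ Modif.app t a := rfl

end ModifApp

section PostcompDopf
variable {A : Type u} [Category.{u} A] {G F : A ⥤ Cat.{u, u}} (φ : G ⟶ F)

theorem postcompNat_dopf
    (hφ : ∀ a : A, DiscreteOpfibration ((φ.app a).toFunctor : (G.obj a : Type u) ⥤ (F.obj a : Type u)))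
    (X : A ⥤ Cat.{u, u}) : DiscreteOpfibration (postcompNat φ X) := by
  intro α β m0
  let m : Modif (α ≫ φ) β := m0
  refine ⟨⟨liftNat φ hφ α m, liftModif φ hφ α m⟩, ⟨liftNat_proj φ hφ α m, ?_⟩, ?_⟩
  · apply Modif.ext; funext a
    apply NatTrans.ext; funext x
    rw [modif_comp_app, NatTrans.comp_app, modif_eqToHom_app, eqToHom_app]
    exact liftMor_proj φ hφ α m a x
  · rintro ⟨α2, M2⟩ ⟨hproj, hmap⟩
    have compproj : ∀ (a : A) (x : X.obj a),
        (⟨(α2.app a).toFunctor.obj x, (Modif.app M2 a).app x⟩ :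
          Σ e' : (G.obj a : Type u), (α.app a).toFunctor.obj x ⟶ e') =
        (hφ a).push ((α.app a).toFunctor.obj x) ((m.app a).app x) := by
      intro a x
      have hpa : ((α2.app a).toFunctor : (X.obj a : Type u) ⥤ (G.obj a : Type u)) ⋙
          ((φ.app a).toFunctor : (G.obj a : Type u) ⥤ (F.obj a : Type u)) =
          ((β.app a).toFunctor : (X.obj a : Type u) ⥤ (F.obj a : Type u)) := congrArg Cat.Hom.toFunctor (NatTrans.congr_app hproj a)
      apply (hφ a).push_uniq _ _ _ (Functor.congr_obj hpa x)
      have h1 := congrArg (fun t => (Modif.app t a).app x) hmap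
      simp only at h1
      rw [modif_comp_app, NatTrans.comp_app, modif_eqToHom_app, eqToHom_app] at h1
      exact h1
    have hα2 : α2 = liftNat φ hφ α m := by
      apply NatTrans.ext; funext a
      apply Cat.Hom.ext
      show ((α2.app a).toFunctor : (X.obj a : Type u) ⥤ (G.obj a : Type u)) = liftFunctor φ hφ α m a
      refine CategoryTheory.Functor.ext
        (fun (x : ↑(X.obj a)) => congrArg Sigma.fst (compproj a x)) ?_
      intro x y u
      apply (hφ a).hom_ext
      have hpa : ((α2.app a).toFunctor : (X.obj a : Type u) ⥤ (G.obj a : Type u)) ⋙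
          ((φ.app a).toFunctor : (G.obj a : Type u) ⥤ (F.obj a : Type u)) =
          ((β.app a).toFunctor : (X.obj a : Type u) ⥤ (F.obj a : Type u)) := congrArg Cat.Hom.toFunctor (NatTrans.congr_app hproj a)
      have h2 := Functor.congr_hom hpa u
      simp only [Functor.comp_map] at h2
      erw [h2, Functor.map_comp, Functor.map_comp, eqToHom_map, eqToHom_map,
        liftFunctor_map, liftMap_proj]
      simp
      erw [Category.assoc, Category.assoc, eqToHom_trans_assoc, eqToHom_trans]
    refine sigma_eq_of M2 (liftModif φ hφ α m) hα2 ?_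
    apply Modif.ext; funext a
    apply NatTrans.ext; funext x
    show liftMor φ hφ α m a x =
      (Modif.app M2 a).app x ≫ (Modif.app (eqToHom hα2) a).app x
    erw [modif_eqToHom_app, eqToHom_app]
    exact (sigma_hom_eq ((compproj a x).trans (Sigma.eta _).symm)).choose_spec

end PostcompDopf

section RepSection
variable {A : Type u} [Category.{u} A]

theorem functor_discrete_ext {I : Type u} {D : Type*} [Category D] {F1 F2 : Discrete I ⥤ D}
    (h : ∀ i : I, F1.obj ⟨i⟩ = F2.obj ⟨i⟩) : F1 = F2 := by
  refine CategoryTheory.Functor.ext (fun x => ?_) ?_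
  · obtain ⟨i⟩ := x; exact h i
  · rintro ⟨i⟩ ⟨j⟩ f
    obtain rfl : i = j := f.down.down
    obtain rfl : f = 𝟙 _ := Subsingleton.elim f (𝟙 _)
    simp

/-- The representable-style functor `A ⥤ Cat` with discrete values `a ⟶ b`. -/
def repY (a : A) : A ⥤ Cat.{u, u} where
  obj b := Cat.of (Discrete (a ⟶ b))
  map {b b'} k := (Discrete.functor (fun h => ⟨h ≫ k⟩)).toCatHom
  map_id b := Cat.Hom.ext <| functor_discrete_ext (fun h => by simp; rfl)
  map_comp k l := Cat.Hom.ext <| functor_discrete_ext (fun h => by simp; exact congrArg Discrete.mk (Category.assoc h k l).symm)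

/-- The natural transformation `repY a ⟶ H` classifying an object `e` of `H.obj a`. -/
def repNat (H : A ⥤ Cat.{u, u}) (a : A) (e : (H.obj a : Type u)) : repY a ⟶ H where
  app b := (Discrete.functor (fun h => (H.map h).toFunctor.obj e)).toCatHom
  naturality {b b'} k := Cat.Hom.ext <| functor_discrete_ext (fun h => by
    have h1 := Functor.congr_obj (congrArg Cat.Hom.toFunctor (H.map_comp h k)) e
    simp only [Cat.Hom.comp_obj] at h1
    exact h1)

variable {G F : A ⥤ Cat.{u, u}} (φ : G ⟶ F)

/-- The modification classifying a morphism `l` of `G.obj a`. -/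
def repModif {a : A} {e e2 : (G.obj a : Type u)} (l : e ⟶ e2) :
    Modif (repNat G a e) (repNat G a e2) where
  app b := Discrete.natTrans (fun X => (G.map X.as).toFunctor.map l)
  naturality {b b'} k := by
    ext ⟨h⟩
    erw [NatTrans.comp_app, NatTrans.comp_app, eqToHom_app, eqToHom_app]
    have h1 := Functor.congr_hom (congrArg Cat.Hom.toFunctor (G.map_comp h k)) l
    simp only [Cat.Hom.comp_map] at h1
    show (G.map (h ≫ k)).toFunctor.map l ≫ eqToHom _ = eqToHom _ ≫ (G.map k).toFunctor.map ((G.map h).toFunctor.map l)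
    rw [h1]
    simp
    erw [eqToHom_trans, eqToHom_refl, Category.comp_id]

/-- The modification classifying a morphism `f` over the components. -/
def repM {a : A} {e : (G.obj a : Type u)} {c : (F.obj a : Type u)}
    (f : (φ.app a).toFunctor.obj e ⟶ c) : Modif (repNat G a e ≫ φ) (repNat F a c) where
  app b := Discrete.natTrans
    (fun X => eqToHom (Functor.congr_obj (natEq φ X.as) e) ≫ (F.map X.as).toFunctor.map f)
  naturality {b b'} k := by
    ext x
    simp only [NatTrans.comp_app, Functor.whiskerLeft_app, Functor.whiskerRight_app, eqToHom_app,
      Discrete.natTrans_app]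
    erw [eqToHom_app]
    obtain ⟨h⟩ := x
    show (eqToHom _ ≫ (F.map (h ≫ k)).toFunctor.map f) ≫ eqToHom _ =
      eqToHom _ ≫ (F.map k).toFunctor.map (eqToHom _ ≫ (F.map h).toFunctor.map f)
    have h1 := Functor.congr_hom (congrArg Cat.Hom.toFunctor (F.map_comp h k)) f
    simp only [Cat.Hom.comp_map] at h1
    rw [h1]
    simp only [Functor.map_comp, eqToHom_map]
    simp
    erw [eqToHom_map, eqToHom_trans_assoc, eqToHom_trans_assoc, eqToHom_trans, eqToHom_refl, Category.comp_id]

theorem repNat_proj {a : A} {e2 : (G.obj a : Type u)} {c : (F.obj a : Type u)}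
    (h2 : (φ.app a).toFunctor.obj e2 = c) : repNat G a e2 ≫ φ = repNat F a c := by
  apply NatTrans.ext; funext b
  apply Cat.Hom.ext
  show (((repNat G a e2).app b).toFunctor : (Discrete (a ⟶ b) : Type u) ⥤ (G.obj b : Type u)) ⋙
      ((φ.app b).toFunctor : (G.obj b : Type u) ⥤ (F.obj b : Type u)) =
    (((repNat F a c).app b).toFunctor : (Discrete (a ⟶ b) : Type u) ⥤ (F.obj b : Type u))
  refine functor_discrete_ext (fun h => ?_)
  have h1 := Functor.congr_obj (natEq φ h) e2
  simp only [Functor.comp_obj] at h1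
  show (φ.app b).toFunctor.obj ((G.map h).toFunctor.obj e2) = (F.map h).toFunctor.obj c
  rw [h1, h2]

theorem component_dopf
    (hX : ∀ X : A ⥤ Cat.{u, u}, DiscreteOpfibration (postcompNat φ X)) (a : A) :
    DiscreteOpfibration ((φ.app a).toFunctor : (G.obj a : Type u) ⥤ (F.obj a : Type u)) := by
  intro e c f
  obtain ⟨⟨α', M⟩, ⟨hproj, hmap⟩, huniq⟩ := hX (repY a) (repNat G a e) (repM φ f)
  have hE : (G.map (𝟙 a)).toFunctor.obj e = e := Functor.congr_obj (congrArg Cat.Hom.toFunctor (G.map_id a)) e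
  have hobj : (φ.app a).toFunctor.obj ((α'.app a).toFunctor.obj ⟨𝟙 a⟩) = c := by
    have hpa : (((α'.app a).toFunctor : (Discrete (a ⟶ a) : Type u) ⥤ (G.obj a : Type u)) ⋙
        ((φ.app a).toFunctor : (G.obj a : Type u) ⥤ (F.obj a : Type u))) =
        (((repNat F a c).app a).toFunctor : (Discrete (a ⟶ a) : Type u) ⥤ (F.obj a : Type u)) :=
      congrArg Cat.Hom.toFunctor (NatTrans.congr_app hproj a)
    have h1 := Functor.congr_obj hpa ⟨𝟙 a⟩
    erw [Functor.comp_obj] at h1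
    exact h1.trans (Functor.congr_obj (congrArg Cat.Hom.toFunctor (F.map_id a)) c)
  refine ⟨⟨(α'.app a).toFunctor.obj ⟨𝟙 a⟩, eqToHom hE.symm ≫ (Modif.app M a).app ⟨𝟙 a⟩⟩,
    ⟨hobj, ?_⟩, ?_⟩
  · have h1 := congrArg (fun t => (Modif.app t a).app (⟨𝟙 a⟩ : Discrete (a ⟶ a))) hmap
    beta_reduce at h1
    erw [modif_comp_app, NatTrans.comp_app ((repM φ f).app a), modif_eqToHom_app, eqToHom_app] at h1
    replace h1 : (φ.app a).toFunctor.map ((Modif.app M a).app (⟨𝟙 a⟩ : Discrete (a ⟶ a))) =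
        (eqToHom (Functor.congr_obj (natEq φ (𝟙 a)) e) ≫ (F.map (𝟙 a)).toFunctor.map f) ≫
          eqToHom (show (F.map (𝟙 a)).toFunctor.obj c = (φ.app a).toFunctor.obj ((α'.app a).toFunctor.obj ⟨𝟙 a⟩) from
            (Functor.congr_obj (congrArg Cat.Hom.toFunctor (F.map_id a)) c).trans hobj.symm) := h1
    erw [Functor.map_comp]; rw [eqToHom_map]; erw [h1]
    have h3 := Functor.congr_hom (congrArg Cat.Hom.toFunctor (F.map_id a)) f
    simp only [Cat.Hom.id_map] at h3
    rw [h3]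
    simp
  · rintro ⟨e2, l2⟩ ⟨h2, hl2⟩
    have hpair := huniq ⟨repNat G a e2, repModif l2⟩ (by
      refine ⟨repNat_proj φ h2, ?_⟩
      apply Modif.ext; funext b
      apply NatTrans.ext; funext XX
      obtain ⟨h⟩ := XX
      erw [modif_comp_app, NatTrans.comp_app ((repM φ f).app b), modif_eqToHom_app, eqToHom_app]
      show (φ.app b).toFunctor.map ((G.map h).toFunctor.map l2) = (eqToHom _ ≫ (F.map h).toFunctor.map f) ≫ eqToHom _
      have hc := Functor.congr_hom (natEq φ h) l2
      simp only [Functor.comp_map] at hc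
      rw [hc, hl2]
      simp only [Functor.map_comp, eqToHom_map]
      simp)
    obtain ⟨ho, hv⟩ := sigma_hom_eq hpair
    have hobj2 : e2 = (α'.app a).toFunctor.obj ⟨𝟙 a⟩ := by
      have h4 := Functor.congr_obj (congrArg Cat.Hom.toFunctor (NatTrans.congr_app ho a)) (⟨𝟙 a⟩ : Discrete (a ⟶ a))
      exact (Functor.congr_obj (congrArg Cat.Hom.toFunctor (G.map_id a)) e2).symm.trans h4
    refine sigma_eq_of l2 _ hobj2 ?_
    have h5 := congrArg (fun t => (Modif.app t a).app (⟨𝟙 a⟩ : Discrete (a ⟶ a))) hv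
    beta_reduce at h5
    erw [modif_comp_app, NatTrans.comp_app ((repModif l2).app a), modif_eqToHom_app, eqToHom_app] at h5
    replace h5 : (Modif.app M a).app (⟨𝟙 a⟩ : Discrete (a ⟶ a)) =
        (G.map (𝟙 a)).toFunctor.map l2 ≫
          eqToHom (show (G.map (𝟙 a)).toFunctor.obj e2 = (α'.app a).toFunctor.obj ⟨𝟙 a⟩ from
            (Functor.congr_obj (congrArg Cat.Hom.toFunctor (G.map_id a)) e2).trans hobj2) := h5
    rw [h5]
    have h6 := Functor.congr_hom (congrArg Cat.Hom.toFunctor (G.map_id a)) l2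
    simp only [Cat.Hom.id_map] at h6
    rw [h6]
    simp

end RepSection

/-- **Statement 6.** A natural transformation `φ : G ⟶ F` of functors `A ⥤ Cat` is a
discrete opfibration in the 2-category `[A, Cat]` (i.e. every postcomposition functor
`φ ∘ −` between hom-categories is a discrete opfibration in `Cat`) if and only if all
its components are discrete opfibrations in `Cat`; in this case the cleavage
preservation condition on the naturality squares is automatic. -/
theorem discrete_opfibration_in_functor_cat_iff {A : Type u} [Category.{u} A]
    {G F : A ⥤ Cat.{u, u}} (φ : G ⟶ F) :
    ((∀ X : A ⥤ Cat.{u, u}, DiscreteOpfibration (postcompNat φ X)) ↔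
      ∀ a : A, DiscreteOpfibration ((φ.app a).toFunctor : (G.obj a : Type u) ⥤ (F.obj a : Type u))) ∧
    ((∀ a : A, DiscreteOpfibration ((φ.app a).toFunctor : (G.obj a : Type u) ⥤ (F.obj a : Type u))) →
      ∀ (cl : ∀ a : A, SplitCleavage ((φ.app a).toFunctor : (G.obj a : Type u) ⥤ (F.obj a : Type u)))
        {a b : A} (h : a ⟶ b),
        PreservesCleavage (cl a) (cl b)
          ((G.map h).toFunctor : (G.obj a : Type u) ⥤ (G.obj b : Type u))
          ((F.map h).toFunctor : (F.obj a : Type u) ⥤ (F.obj b : Type u))) := by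
  constructor
  · exact ⟨component_dopf φ, postcompNat_dopf φ⟩
  · intro hcomp cl a b h
    refine ⟨(natEq φ h).symm, fun e c f => ?_⟩
    have h2 : (φ.app b).toFunctor.obj ((cl b).pushObj ((G.map h).toFunctor.obj e)
          (eqToHom (Functor.congr_obj (natEq φ h).symm e).symm ≫ (F.map h).toFunctor.map f)) =
        (φ.app b).toFunctor.obj ((G.map h).toFunctor.obj ((cl a).pushObj e f)) := by
      rw [(cl b).pushObj_eq]
      have h3 := Functor.congr_obj (natEq φ h) ((cl a).pushObj e f)
      simp only [Functor.comp_obj] at h3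
      rw [h3, (cl a).pushObj_eq]
    have hm : (φ.app b).toFunctor.map ((cl b).pushMap ((G.map h).toFunctor.obj e)
          (eqToHom (Functor.congr_obj (natEq φ h).symm e).symm ≫ (F.map h).toFunctor.map f)) =
        (φ.app b).toFunctor.map ((G.map h).toFunctor.map ((cl a).pushMap e f)) ≫ eqToHom h2.symm := by
      rw [(cl b).pushMap_eq]
      have h4 := Functor.congr_hom (natEq φ h) ((cl a).pushMap e f)
      simp only [Functor.comp_map] at h4
      rw [h4, (cl a).pushMap_eq]
      simp only [Functor.map_comp, eqToHom_map]
      simp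
    obtain ⟨ho, hv⟩ := sigma_hom_eq ((hcomp b).sigmaEq
      ((G.map h).toFunctor.map ((cl a).pushMap e f))
      ((cl b).pushMap ((G.map h).toFunctor.obj e)
        (eqToHom (Functor.congr_obj (natEq φ h).symm e).symm ≫ (F.map h).toFunctor.map f)) h2 hm)
    refine ⟨ho.symm, ?_⟩
    rw [hv]
    simp

end IG
end

section
/- Let L be a 2-category admitting strict pullbacks (preserved by the representables L(X, −)). If φ : G → F is a split opfibration in L and α : F' → F is any morphism of L, then the pullback α*φ : α*G → F' of φ along α is a split opfibration in L; moreover the cleavage of α*φ can be chosen so that the universal square exhibiting the pullback is cleavage preserving. -/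
universe w' w v u
open CategoryTheory
namespace IG

namespace SplitCleavage
variable {E : Type*} [Category E] {C : Type*} [Category C] {p : E ⥤ C} (cp : SplitCleavage p)

lemma pushObj_congr_arg {e : E} {c : C} {f f' : p.obj e ⟶ c} (h : f = f') :
    cp.pushObj e f = cp.pushObj e f' := by rw [h]

lemma pushObj_eqToHom (e : E) {c : C} (h : p.obj e = c) :
    cp.pushObj e (eqToHom h) = e := by
  subst h; simpa using cp.pushObj_id e

lemma pushMap_congr_arg {e : E} {c : C} {f f' : p.obj e ⟶ c} (h : f = f') :
    cp.pushMap e f = cp.pushMap e f' ≫ eqToHom (cp.pushObj_congr_arg h).symm := by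
  subst h; simp

lemma pushMap_eqToHom (e : E) {c : C} (h : p.obj e = c) :
    cp.pushMap e (eqToHom h) = eqToHom (cp.pushObj_eqToHom e h).symm := by
  subst h
  rw [cp.pushMap_congr_arg (eqToHom_refl (p.obj e) rfl), cp.pushMap_id]
  simp
  exact eqToHom_trans _ _

lemma pushObj_congr {e e' : E} (h : e = e') {c : C} (f : p.obj e ⟶ c) :
    cp.pushObj e f = cp.pushObj e' (eqToHom (congrArg p.obj h).symm ≫ f) := by
  subst h; simp

lemma pushMap_congr {e e' : E} (h : e = e') {c : C} (f : p.obj e ⟶ c) :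
    cp.pushMap e f =
      eqToHom h ≫ cp.pushMap e' (eqToHom (congrArg p.obj h).symm ≫ f) ≫
        eqToHom (cp.pushObj_congr h f).symm := by
  subst h; simp

lemma pushObj_comp_eqToHom (e : E) {c c' : C} (f : p.obj e ⟶ c) (h : c = c') :
    cp.pushObj e (f ≫ eqToHom h) = cp.pushObj e f := by
  subst h; exact cp.pushObj_congr_arg (by simp)

lemma pushMap_comp_eqToHom (e : E) {c c' : C} (f : p.obj e ⟶ c) (h : c = c') :
    cp.pushMap e (f ≫ eqToHom h) =
      cp.pushMap e f ≫ eqToHom (cp.pushObj_comp_eqToHom e f h).symm := by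
  subst h
  rw [cp.pushMap_congr_arg (show f ≫ eqToHom rfl = f by simp)]

end SplitCleavage

section Abstract

variable {A : Type*} [Category A] {Gc : Type*} [Category Gc]
  {F1 : Type*} [Category F1] {Fo : Type*} [Category Fo]

/-- The data of a strict pullback of categories (1- and 2-dimensional universal
properties, stated elementwise). -/
structure PBHyp (Q1 : A ⥤ Gc) (Q2 : A ⥤ F1) (Pphi : Gc ⥤ Fo) (Palpha : F1 ⥤ Fo) : Prop where
  wF : Q2 ⋙ Palpha = Q1 ⋙ Pphi
  h1 : ∀ (u : Gc) (v : F1), Pphi.obj u = Palpha.obj v →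
    ∃! t : A, Q1.obj t = u ∧ Q2.obj t = v
  h2 : ∀ (t t' : A) (ξ : Q1.obj t ⟶ Q1.obj t') (ζ : Q2.obj t ⟶ Q2.obj t'),
    eqToHom (Functor.congr_obj wF t).symm ≫ Palpha.map ζ ≫ eqToHom (Functor.congr_obj wF t') =
      Pphi.map ξ →
    ∃! Θ : t ⟶ t', Q1.map Θ = ξ ∧ Q2.map Θ = ζ

namespace PBHyp

variable {Q1 : A ⥤ Gc} {Q2 : A ⥤ F1} {Pphi : Gc ⥤ Fo} {Palpha : F1 ⥤ Fo}

/-- the pointwise object equality of the commuting square -/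
lemma w (D : PBHyp Q1 Q2 Pphi Palpha) (t : A) : Pphi.obj (Q1.obj t) = Palpha.obj (Q2.obj t) :=
  (Functor.congr_obj D.wF t).symm

lemma wm (D : PBHyp Q1 Q2 Pphi Palpha) {t t' : A} (m : t ⟶ t') :
    Pphi.map (Q1.map m) = eqToHom (D.w t) ≫ Palpha.map (Q2.map m) ≫ eqToHom (D.w t').symm := by
  have := Functor.congr_hom D.wF m
  simp only [Functor.comp_obj, Functor.comp_map] at this
  rw [this]
  simp [w]

lemma jointly_faithful (D : PBHyp Q1 Q2 Pphi Palpha) {t t' : A} (a b : t ⟶ t')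
    (hQ1 : Q1.map a = Q1.map b) (hQ2 : Q2.map a = Q2.map b) : a = b := by
  have cond : eqToHom (Functor.congr_obj D.wF t).symm ≫ Palpha.map (Q2.map a) ≫
      eqToHom (Functor.congr_obj D.wF t') = Pphi.map (Q1.map a) := by
    rw [D.wm a]
  obtain ⟨Θ, _, hs⟩ := D.h2 t t' (Q1.map a) (Q2.map a) cond
  rw [hs a ⟨rfl, rfl⟩, hs b ⟨hQ1.symm, hQ2.symm⟩]

noncomputable def lift (D : PBHyp Q1 Q2 Pphi Palpha) (u : Gc) (v : F1)
    (h : Pphi.obj u = Palpha.obj v) : A := (D.h1 u v h).choose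

lemma lift_fst (D : PBHyp Q1 Q2 Pphi Palpha) (u : Gc) (v : F1) (h : Pphi.obj u = Palpha.obj v) :
    Q1.obj (D.lift u v h) = u := (D.h1 u v h).choose_spec.1.1

lemma lift_snd (D : PBHyp Q1 Q2 Pphi Palpha) (u : Gc) (v : F1) (h : Pphi.obj u = Palpha.obj v) :
    Q2.obj (D.lift u v h) = v := (D.h1 u v h).choose_spec.1.2

lemma lift_unique (D : PBHyp Q1 Q2 Pphi Palpha) {u : Gc} {v : F1} {h : Pphi.obj u = Palpha.obj v}
    {t : A} (h1 : Q1.obj t = u) (h2 : Q2.obj t = v) : t = D.lift u v h :=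
  (D.h1 u v h).choose_spec.2 t ⟨h1, h2⟩

noncomputable def lift2 (D : PBHyp Q1 Q2 Pphi Palpha) {t t' : A}
    (ξ : Q1.obj t ⟶ Q1.obj t') (ζ : Q2.obj t ⟶ Q2.obj t')
    (h : eqToHom (Functor.congr_obj D.wF t).symm ≫ Palpha.map ζ ≫
      eqToHom (Functor.congr_obj D.wF t') = Pphi.map ξ) : t ⟶ t' :=
  (D.h2 t t' ξ ζ h).choose

lemma lift2_fst (D : PBHyp Q1 Q2 Pphi Palpha) {t t' : A}
    (ξ : Q1.obj t ⟶ Q1.obj t') (ζ : Q2.obj t ⟶ Q2.obj t') (h) :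
    Q1.map (D.lift2 ξ ζ h) = ξ := (D.h2 t t' ξ ζ h).choose_spec.1.1

lemma lift2_snd (D : PBHyp Q1 Q2 Pphi Palpha) {t t' : A}
    (ξ : Q1.obj t ⟶ Q1.obj t') (ζ : Q2.obj t ⟶ Q2.obj t') (h) :
    Q2.map (D.lift2 ξ ζ h) = ζ := (D.h2 t t' ξ ζ h).choose_spec.1.2

end PBHyp

namespace PB
variable {Q1 : A ⥤ Gc} {Q2 : A ⥤ F1} {Pphi : Gc ⥤ Fo} {Palpha : F1 ⥤ Fo}
variable (D : PBHyp Q1 Q2 Pphi Palpha) (cp : SplitCleavage Pphi)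

/-- the morphism downstairs along which we push, for a pushing problem upstairs -/
def g (t : A) {v : F1} (f : Q2.obj t ⟶ v) : Pphi.obj (Q1.obj t) ⟶ Palpha.obj v :=
  eqToHom (D.w t) ≫ Palpha.map f

noncomputable def pushObj (t : A) {v : F1} (f : Q2.obj t ⟶ v) : A :=
  D.lift (cp.pushObj (Q1.obj t) (g D t f)) v (cp.pushObj_eq _ _)

lemma pushObj_fst (t : A) {v : F1} (f : Q2.obj t ⟶ v) :
    Q1.obj (pushObj D cp t f) = cp.pushObj (Q1.obj t) (g D t f) := D.lift_fst _ _ _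

lemma pushObj_snd (t : A) {v : F1} (f : Q2.obj t ⟶ v) :
    Q2.obj (pushObj D cp t f) = v := D.lift_snd _ _ _

lemma pushMap_cond (t : A) {v : F1} (f : Q2.obj t ⟶ v) :
    eqToHom (Functor.congr_obj D.wF t).symm ≫
        Palpha.map (f ≫ eqToHom (pushObj_snd D cp t f).symm) ≫
        eqToHom (Functor.congr_obj D.wF (pushObj D cp t f)) =
      Pphi.map (cp.pushMap (Q1.obj t) (g D t f) ≫ eqToHom (pushObj_fst D cp t f).symm) := by
  rw [Functor.map_comp, Functor.map_comp, cp.pushMap_eq, eqToHom_map, eqToHom_map]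
  simp only [g, Category.assoc, eqToHom_trans, PBHyp.w, Functor.comp_obj]
  exact congrArg (fun x => eqToHom _ ≫ Palpha.map f ≫ x) (eqToHom_trans _ _).symm

noncomputable def pushMap (t : A) {v : F1} (f : Q2.obj t ⟶ v) : t ⟶ pushObj D cp t f :=
  D.lift2 (cp.pushMap (Q1.obj t) (g D t f) ≫ eqToHom (pushObj_fst D cp t f).symm)
    (f ≫ eqToHom (pushObj_snd D cp t f).symm) (pushMap_cond D cp t f)

lemma pushMap_fst (t : A) {v : F1} (f : Q2.obj t ⟶ v) :
    Q1.map (pushMap D cp t f) =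
      cp.pushMap (Q1.obj t) (g D t f) ≫ eqToHom (pushObj_fst D cp t f).symm :=
  D.lift2_fst _ _ _

lemma pushMap_snd (t : A) {v : F1} (f : Q2.obj t ⟶ v) :
    Q2.map (pushMap D cp t f) = f ≫ eqToHom (pushObj_snd D cp t f).symm :=
  D.lift2_snd _ _ _

lemma cocart (t : A) {v : F1} (f : Q2.obj t ⟶ v) {e' : A} (m : t ⟶ e')
    (g' : v ⟶ Q2.obj e') (hm : Q2.map m = f ≫ g') :
    ∃! V : pushObj D cp t f ⟶ e',
      Q2.map V = eqToHom (pushObj_snd D cp t f) ≫ g' ∧ pushMap D cp t f ≫ V = m := by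
  have hphi : Pphi.map (Q1.map m) =
      g D t f ≫ (Palpha.map g' ≫ eqToHom (D.w e').symm) := by
    rw [D.wm m, hm, Functor.map_comp]
    simp only [g, Category.assoc]
  obtain ⟨xi, ⟨hxi1, hxi2⟩, hxiu⟩ := cp.cocartesian (Q1.obj t) (g D t f) (Q1.map m)
    (Palpha.map g' ≫ eqToHom (D.w e').symm) hphi
  have cond : eqToHom (Functor.congr_obj D.wF (pushObj D cp t f)).symm ≫
      Palpha.map (eqToHom (pushObj_snd D cp t f) ≫ g') ≫
      eqToHom (Functor.congr_obj D.wF e') =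
      Pphi.map (eqToHom (pushObj_fst D cp t f) ≫ xi) := by
    rw [Functor.map_comp, Functor.map_comp, hxi1, eqToHom_map, eqToHom_map]
    simp only [Category.assoc, eqToHom_trans, eqToHom_trans_assoc, PBHyp.w]
  refine ⟨D.lift2 _ _ cond, ⟨?_, ?_⟩, ?_⟩
  · rw [D.lift2_snd]
  · refine D.jointly_faithful _ _ ?_ ?_
    · rw [Functor.map_comp, D.lift2_fst, pushMap_fst]
      simp only [Category.assoc, eqToHom_trans_assoc, eqToHom_refl, Category.id_comp]
      exact hxi2
    · rw [Functor.map_comp, D.lift2_snd, pushMap_snd, hm]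
      simp
  · rintro V ⟨hV1, hV2⟩
    refine D.jointly_faithful _ _ ?_ ?_
    · rw [D.lift2_fst]
      have hchi : eqToHom (pushObj_fst D cp t f).symm ≫ Q1.map V = xi := by
        refine hxiu _ ⟨?_, ?_⟩
        · rw [Functor.map_comp, eqToHom_map, D.wm V, hV1, Functor.map_comp, eqToHom_map]
          simp only [Category.assoc, eqToHom_trans_assoc, PBHyp.w]
        · rw [← Category.assoc, ← pushMap_fst, ← Functor.map_comp, hV2]
      rw [← hchi]
      simp
    · rw [D.lift2_snd, hV1]

lemma pushObj_id (t : A) : pushObj D cp t (𝟙 (Q2.obj t)) = t := by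
  refine (D.lift_unique ?_ rfl).symm
  have : g D t (𝟙 (Q2.obj t)) = eqToHom (D.w t) := by simp [g]
  rw [this, cp.pushObj_eqToHom]

lemma pushMap_id (t : A) : pushMap D cp t (𝟙 (Q2.obj t)) = eqToHom (pushObj_id D cp t).symm := by
  refine D.jointly_faithful _ _ ?_ ?_
  · rw [pushMap_fst, eqToHom_map]
    have : g D t (𝟙 (Q2.obj t)) = eqToHom (D.w t) := by simp [g]
    rw [cp.pushMap_congr_arg this, cp.pushMap_eqToHom]
    simp
  · rw [pushMap_snd, eqToHom_map]
    simp

lemma harg (t : A) {c c' : F1} (f : Q2.obj t ⟶ c) (gm : c ⟶ c') :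
    eqToHom (congrArg Pphi.obj (pushObj_fst D cp t f)).symm ≫
        g D (pushObj D cp t f) (eqToHom (pushObj_snd D cp t f) ≫ gm) =
      eqToHom (cp.pushObj_eq (Q1.obj t) (g D t f)) ≫ Palpha.map gm := by
  simp only [g, Functor.map_comp, eqToHom_map, eqToHom_trans_assoc, Category.assoc, PBHyp.w,
    Functor.comp_obj]
  exact (Category.assoc _ _ _).symm.trans (congrArg (· ≫ Palpha.map gm) (eqToHom_trans _ _))

lemma gcomp (t : A) {c c' : F1} (f : Q2.obj t ⟶ c) (gm : c ⟶ c') :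
    cp.pushObj (Q1.obj (pushObj D cp t f))
        (g D (pushObj D cp t f) (eqToHom (pushObj_snd D cp t f) ≫ gm)) =
      cp.pushObj (Q1.obj t) (g D t (f ≫ gm)) := by
  rw [cp.pushObj_congr (pushObj_fst D cp t f), cp.pushObj_congr_arg (harg D cp t f gm),
    cp.pushObj_comp]
  apply cp.pushObj_congr_arg
  simp [g]

lemma pushObj_comp (t : A) {c c' : F1} (f : Q2.obj t ⟶ c) (gm : c ⟶ c') :
    pushObj D cp (pushObj D cp t f) (eqToHom (pushObj_snd D cp t f) ≫ gm) =
      pushObj D cp t (f ≫ gm) :=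
  (D.lift_unique ((pushObj_fst D cp t (f ≫ gm)).trans (gcomp D cp t f gm).symm)
    (pushObj_snd D cp t (f ≫ gm))).symm

lemma pushMap_comp (t : A) {c c' : F1} (f : Q2.obj t ⟶ c) (gm : c ⟶ c') :
    pushMap D cp t f ≫ pushMap D cp (pushObj D cp t f) (eqToHom (pushObj_snd D cp t f) ≫ gm) =
      pushMap D cp t (f ≫ gm) ≫ eqToHom (pushObj_comp D cp t f gm).symm := by
  refine D.jointly_faithful _ _ ?_ ?_
  · rw [Functor.map_comp, Functor.map_comp, pushMap_fst, pushMap_fst, pushMap_fst, eqToHom_map,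
      cp.pushMap_congr (pushObj_fst D cp t f), cp.pushMap_congr_arg (harg D cp t f gm)]
    have hc := cp.pushMap_comp (Q1.obj t) (g D t f) (Palpha.map gm)
    have harg2 : g D t f ≫ Palpha.map gm = g D t (f ≫ gm) := by simp [g]
    rw [cp.pushMap_congr_arg harg2] at hc
    simp only [Category.assoc, eqToHom_trans_assoc, eqToHom_refl, Category.id_comp]
    rw [← Category.assoc, hc]
    simp only [Category.assoc, eqToHom_trans]
  · rw [Functor.map_comp, Functor.map_comp, pushMap_snd, pushMap_snd, pushMap_snd, eqToHom_map]
    simp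

end PB

namespace PB
variable {Q1 : A ⥤ Gc} {Q2 : A ⥤ F1} {Pphi : Gc ⥤ Fo} {Palpha : F1 ⥤ Fo}
variable (D : PBHyp Q1 Q2 Pphi Palpha) (cp : SplitCleavage Pphi)

noncomputable def cleavage : SplitCleavage Q2 where
  pushObj := pushObj D cp
  pushMap := pushMap D cp
  pushObj_eq := pushObj_snd D cp
  pushMap_eq := pushMap_snd D cp
  cocartesian := cocart D cp
  pushObj_id := pushObj_id D cp
  pushMap_id := pushMap_id D cp
  pushObj_comp := pushObj_comp D cp
  pushMap_comp := pushMap_comp D cp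

@[simp] lemma cleavage_pushObj (t : A) {v : F1} (f : Q2.obj t ⟶ v) :
    (cleavage D cp).pushObj t f = pushObj D cp t f := rfl

@[simp] lemma cleavage_pushMap (t : A) {v : F1} (f : Q2.obj t ⟶ v) :
    (cleavage D cp).pushMap t f = pushMap D cp t f := rfl

lemma cleavage_preserves : PreservesCleavage (cleavage D cp) cp Q1 Palpha := by
  refine ⟨D.wF, fun t v f => ?_⟩
  exact ⟨(pushObj_fst D cp t f).symm, pushMap_fst D cp t f⟩

section Transport

variable {A2 : Type*} [Category A2] {Gc2 : Type*} [Category Gc2]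
  {F12 : Type*} [Category F12] {Fo2 : Type*} [Category Fo2]
variable {Q12 : A2 ⥤ Gc2} {Q22 : A2 ⥤ F12} {Pphi2 : Gc2 ⥤ Fo2} {Palpha2 : F12 ⥤ Fo2}
variable (D2 : PBHyp Q12 Q22 Pphi2 Palpha2) (cp2 : SplitCleavage Pphi2)
variable {RA : A ⥤ A2} {RG : Gc ⥤ Gc2} {RF1 : F1 ⥤ F12} {RFo : Fo ⥤ Fo2}

lemma cleavage_transport
    (e1 : Q1 ⋙ RG = RA ⋙ Q12) (e2 : Q2 ⋙ RF1 = RA ⋙ Q22)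
    (ealpha : Palpha ⋙ RFo = RF1 ⋙ Palpha2)
    (hphi : PreservesCleavage cp cp2 RG RFo) :
    PreservesCleavage (cleavage D cp) (cleavage D2 cp2) RA RF1 := by
  obtain ⟨ephi, hphi'⟩ := hphi
  refine ⟨e2, fun t v f => ?_⟩
  set f2 : Q22.obj (RA.obj t) ⟶ RF1.obj v :=
    eqToHom (Functor.congr_obj e2 t).symm ≫ RF1.map f with hf2
  obtain ⟨hobjphi, hmapphi⟩ := hphi' (Q1.obj t) (g D t f)
  have hQ1 : Q12.obj (RA.obj t) = RG.obj (Q1.obj t) := (Functor.congr_obj e1 t).symm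
  have hargT : eqToHom (congrArg Pphi2.obj hQ1).symm ≫ g D2 (RA.obj t) f2 =
      (eqToHom (Functor.congr_obj ephi (Q1.obj t)).symm ≫ RFo.map (g D t f)) ≫
        eqToHom (Functor.congr_obj ealpha v) := by
    have := Functor.congr_hom ealpha f
    simp only [Functor.comp_obj, Functor.comp_map] at this
    simp only [g, hf2, Functor.map_comp, eqToHom_map, this, Category.assoc,
      eqToHom_trans, eqToHom_trans_assoc, PBHyp.w, eqToHom_refl, Category.comp_id]
  have hU : cp2.pushObj (Q12.obj (RA.obj t)) (g D2 (RA.obj t) f2) =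
      RG.obj (cp.pushObj (Q1.obj t) (g D t f)) := by
    rw [cp2.pushObj_congr hQ1, cp2.pushObj_congr_arg hargT, cp2.pushObj_comp_eqToHom, hobjphi]
  have hobj : PB.pushObj D2 cp2 (RA.obj t) f2 = RA.obj (PB.pushObj D cp t f) := by
    refine (D2.lift_unique ?_ ?_).symm
    · have h := Functor.congr_obj e1 (PB.pushObj D cp t f)
      simp only [Functor.comp_obj] at h
      rw [← h, PB.pushObj_fst D cp t f, ← hU]
    · have h := Functor.congr_obj e2 (PB.pushObj D cp t f)
      simp only [Functor.comp_obj] at h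
      rw [← h, PB.pushObj_snd D cp t f]
  refine ⟨hobj, ?_⟩
  simp only [cleavage_pushMap, cleavage_pushObj] at *
  refine D2.jointly_faithful _ _ ?_ ?_
  · have he1 := Functor.congr_hom e1 (PB.pushMap D cp t f)
    simp only [Functor.comp_obj, Functor.comp_map] at he1
    have hb1 : Q12.map (RA.map (PB.pushMap D cp t f)) =
        eqToHom (Functor.congr_obj e1 t).symm ≫ RG.map (Q1.map (PB.pushMap D cp t f)) ≫
          eqToHom (Functor.congr_obj e1 (PB.pushObj D cp t f)) := by
      rw [he1]; simp
    rw [hb1, PB.pushMap_fst D cp t f, Functor.map_comp RG, eqToHom_map RG, hmapphi,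
      Functor.map_comp Q12, eqToHom_map Q12, PB.pushMap_fst D2 cp2 (RA.obj t) f2,
      cp2.pushMap_congr hQ1 (g D2 (RA.obj t) f2), cp2.pushMap_congr_arg hargT,
      cp2.pushMap_comp_eqToHom]
    simp only [Category.assoc, eqToHom_trans, eqToHom_trans_assoc]
  · have he2 := Functor.congr_hom e2 (PB.pushMap D cp t f)
    simp only [Functor.comp_obj, Functor.comp_map] at he2
    have hb2 : Q22.map (RA.map (PB.pushMap D cp t f)) =
        eqToHom (Functor.congr_obj e2 t).symm ≫ RF1.map (Q2.map (PB.pushMap D cp t f)) ≫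
          eqToHom (Functor.congr_obj e2 (PB.pushObj D cp t f)) := by
      rw [he2]; simp
    rw [hb2, PB.pushMap_snd D cp t f, Functor.map_comp Q22,
      PB.pushMap_snd D2 cp2 (RA.obj t) f2, eqToHom_map Q22]
    simp only [Functor.map_comp, eqToHom_map, Category.assoc, eqToHom_trans,
      eqToHom_trans_assoc]
    rw [← Category.assoc]

end Transport

end PB

end Abstract


section Statement8

open Bicategory

variable {B : Type w} [Bicategory.{w', v} B] [Bicategory.Strict B]

/-- Postcomposition with a 1-cell `φ : G ⟶ F`, as a functor between hom-categories. -/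
def postcompHom {X G F : B} (φ : G ⟶ F) : (X ⟶ G) ⥤ (X ⟶ F) :=
  (Bicategory.postcomposing X G F).obj φ

/-- Precomposition with a 1-cell `lam : K ⟶ X`, as a functor between hom-categories. -/
def precompHom {K X : B} (lam : K ⟶ X) (G : B) : (X ⟶ G) ⥤ (K ⟶ G) :=
  (Bicategory.precomposing K X G).obj lam

/-- A split opfibration in a (strict) 2-category `B`: a 1-cell `φ : G ⟶ F` such that
every postcomposition functor `φ ∘ − : B(X, G) ⥤ B(X, F)` carries a split cleavage,
compatibly with all precompositions. -/
structure SplitOpfibInBicat {G F : B} (φ : G ⟶ F) where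
  cleav : ∀ X : B, SplitCleavage (postcompHom (X := X) φ)
  compat : ∀ {K X : B} (lam : K ⟶ X),
    PreservesCleavage (cleav X) (cleav K) (precompHom lam G) (precompHom lam F)

/-- A strict pullback square in a (strict) 2-category `B`, preserved by all the
representables `B(X, −)`: the 1- and 2-dimensional universal properties of a strict
pullback of categories hold for each hom-category. -/
def IsStrict2Pullback {P G F' F : B} (pi1 : P ⟶ G) (pi2 : P ⟶ F')
    (φ : G ⟶ F) (α : F' ⟶ F) (comm : pi1 ≫ φ = pi2 ≫ α) : Prop :=
  (∀ (X : B) (u : X ⟶ G) (v : X ⟶ F'), u ≫ φ = v ≫ α →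
    ∃! t : X ⟶ P, t ≫ pi1 = u ∧ t ≫ pi2 = v) ∧
  (∀ (X : B) (t t' : X ⟶ P) (ξ : t ≫ pi1 ⟶ t' ≫ pi1) (ζ : t ≫ pi2 ⟶ t' ≫ pi2),
    eqToHom (by simp only [Bicategory.Strict.assoc, comm]) ≫
        (ζ ▷ α) ≫ eqToHom (by simp only [Bicategory.Strict.assoc, comm]) =
      (ξ ▷ φ) →
    ∃! Θ : t ⟶ t', Θ ▷ pi1 = ξ ∧ Θ ▷ pi2 = ζ)

lemma comp_eqToHom_eqToHom' {C : Type*} [Category C] {X Y Z : C} (f : X ⟶ Y) (p : Y = Z)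
    (q : Z = Y) : f = f ≫ eqToHom p ≫ eqToHom q := by simp

lemma postcompHom_comp {X Y Z W : B} (f : Y ⟶ Z) (g : Z ⟶ W) :
    postcompHom (X := X) f ⋙ postcompHom (X := X) g = postcompHom (X := X) (f ≫ g) := by
  refine CategoryTheory.Functor.ext (fun t => Category.assoc t f g) ?_
  intro t t' θ
  simp [postcompHom, Bicategory.whiskerRight_comp, Bicategory.Strict.associator_eqToIso,
    Bicategory.postcomposing_obj, Bicategory.postcomp_map]
  change (θ ▷ f) ▷ g = eqToHom _ ≫ θ ▷ (f ≫ g) ≫ eqToHom _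
  simp [Bicategory.whiskerRight_comp, Bicategory.Strict.associator_eqToIso]
  exact comp_eqToHom_eqToHom' _ _ _

lemma precomp_postcompHom {K X Y Z : B} (lam : K ⟶ X) (f : Y ⟶ Z) :
    postcompHom (X := X) f ⋙ precompHom lam Z = precompHom lam Y ⋙ postcompHom (X := K) f := by
  refine CategoryTheory.Functor.ext (fun t => (Category.assoc lam t f).symm) ?_
  intro t t' θ
  simp [postcompHom, precompHom, Bicategory.whisker_assoc, Bicategory.Strict.associator_eqToIso,
    Bicategory.postcomposing_obj, Bicategory.postcomp_map, Bicategory.precomposing_obj,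
    Bicategory.precomp_map]
  change lam ◁ (θ ▷ f) = eqToHom _ ≫ (lam ◁ θ) ▷ f ≫ eqToHom _
  simp [Bicategory.whisker_assoc, Bicategory.Strict.associator_eqToIso]
  exact comp_eqToHom_eqToHom' _ _ _

/-- **Statement 8.** In a 2-category with strict pullbacks preserved by the
representables, the pullback of a split opfibration `φ` along any 1-cell `α` is a
split opfibration, with cleavage chosen so that the universal square exhibiting the
pullback is cleavage preserving. -/
theorem pullback_of_split_opfibration {P G F' F : B} (φ : G ⟶ F) (α : F' ⟶ F)
    (pi1 : P ⟶ G) (pi2 : P ⟶ F') (comm : pi1 ≫ φ = pi2 ≫ α)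
    (hpb : IsStrict2Pullback pi1 pi2 φ α comm)
    (S : SplitOpfibInBicat φ) :
    ∃ S' : SplitOpfibInBicat pi2,
      ∀ X : B, PreservesCleavage (S'.cleav X) (S.cleav X)
        (postcompHom (X := X) pi1) (postcompHom (X := X) α) := by
  have D : ∀ X : B, PBHyp (postcompHom (X := X) pi1) (postcompHom (X := X) pi2)
      (postcompHom (X := X) φ) (postcompHom (X := X) α) := fun X =>
    { wF := by rw [postcompHom_comp, postcompHom_comp, comm]
      h1 := fun u v h => hpb.1 X u v h
      h2 := fun t t' ξ ζ h => hpb.2 X t t' ξ ζ h }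
  exact ⟨⟨fun X => PB.cleavage (D X) (S.cleav X), fun {K X} lam =>
    PB.cleavage_transport (D X) (S.cleav X) (D K) (S.cleav K)
      (precomp_postcompHom lam pi1) (precomp_postcompHom lam pi2)
      (precomp_postcompHom lam α) (S.compat lam)⟩,
    fun X => PB.cleavage_preserves (D X) (S.cleav X)⟩

end Statement8

end IG
end
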